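/- arXiv:2101.00851 — 5 statements merged into one kernel-verified Lean document; each statement's English description precedes it below -/
import Mathlib

section
/- Let R : ℕ → ℝ be positive on positive inputs, and define CR(l,k) = (k+1)·R(l+k) and AC(l,k) = l·R(l+k). Then it is impossible that for all l ≥ 1 and k ∈ ℕ, CR(l,k) ≤ CR(l,0) and AC(l,k) ≥ AC(l,0). -/
theorem mixing_incentive_impossible (R : ℕ → ℝ)
    (hR : ∀ l, 1 ≤ l → 0 < R l)
    (CR : ℕ → ℕ → ℝ) (AC : ℕ → ℕ → ℝ)
    (hCR : ∀ l k, CR l k = ((k : ℝ) + 1) * R (l + k))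
    (hAC : ∀ l k, AC l k = (l : ℝ) * R (l + k)) :
    ¬ (∀ l, 1 ≤ l → ∀ k : ℕ, CR l k ≤ CR l 0 ∧ AC l 0 ≤ AC l k) := by
  intro h
  obtain ⟨h1, h2⟩ := h 1 le_rfl 1
  rw [hCR, hCR, hAC, hAC] at *
  simp at h1 h2
  have r2 := hR 2 (by norm_num)
  nlinarith
end

section
/- Suppose a cost function C : ℕ → ℝ with C(l) > 0 for l ≥ 1 defines uniform rewards R(l) = C(l)/l. If for every l ≥ 1 and k ≥ 1 a concealer-side edge insertion attack is unprofitable, i.e. (k+1)·C(l+k)/(l+k) ≤ C(l)/l, then for every l ≥ 1 and k ≥ 1 an applicant-side attack is strictly profitable, i.e. C(l+k) − k·C(l+k)/(l+k) < C(l). -/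
theorem concealer_safe_implies_applicant_attack (C : ℕ → ℝ)
    (hC : ∀ l : ℕ, 1 ≤ l → 0 < C l)
    (hconc : ∀ l : ℕ, 1 ≤ l → ∀ k : ℕ, 1 ≤ k →
      ((k : ℝ) + 1) * C (l + k) / ((l : ℝ) + (k : ℝ)) ≤ C l / (l : ℝ)) :
    ∀ l : ℕ, 1 ≤ l → ∀ k : ℕ, 1 ≤ k →
      C (l + k) - (k : ℝ) * C (l + k) / ((l : ℝ) + (k : ℝ)) < C l := by
  intro l hl k hk
  have hl' : (0:ℝ) < l := by exact_mod_cast hl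
  have hk' : (0:ℝ) < k := by exact_mod_cast hk
  have hlk : (0:ℝ) < (l:ℝ) + (k:ℝ) := by linarith
  have hClk : 0 < C (l + k) := hC _ (le_trans hl (Nat.le_add_right _ _))
  have h := hconc l hl k hk
  rw [div_le_div_iff₀ hlk hl'] at h
  have key : C (l+k) - (k:ℝ) * C (l+k) / ((l:ℝ)+(k:ℝ))
      = (l:ℝ) * C (l+k) / ((l:ℝ)+(k:ℝ)) := by
    field_simp; ring
  rw [key, div_lt_iff₀ hlk]
  nlinarith [mul_pos (mul_pos hk' hl') hClk]
end

section
/- The decision version of multi-target merge avoidance is NP-hard: given a multiset S of positive integers with even sum 2v, S can be partitioned into two subsets each summing to v if and only if the merge avoidance instance with input values the elements of S (ℓ = |S| inputs) and two outputs each of value v admits a solution matrix (m_{i,j}) with exactly ℓ strictly positive entries. -/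
theorem merge_avoidance_NP_hard_reduction (ℓ : ℕ) (s : Fin ℓ → ℕ) (v : ℕ)
    (hpos : ∀ i, 0 < s i) (hsum : ∑ i, s i = 2 * v) :
    (∃ K : Finset (Fin ℓ), ∑ i ∈ K, s i = v) ↔
    (∃ m : Fin ℓ → Fin 2 → ℕ,
      (∀ i, ∑ j, m i j = s i) ∧
      (∀ j, ∑ i, m i j = v) ∧
      (Finset.univ.filter (fun p : Fin ℓ × Fin 2 => 0 < m p.1 p.2)).card = ℓ) := by
  constructor
  · rintro ⟨K, hK⟩
    have hKc : ∑ i ∈ Kᶜ, s i = v := by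
      have := Finset.sum_add_sum_compl K s
      omega
    refine ⟨fun i j => if (i ∈ K ∧ j = 0) ∨ (i ∉ K ∧ j = 1) then s i else 0, ?_, ?_, ?_⟩
    · intro i
      rw [Fin.sum_univ_two]
      by_cases h : i ∈ K <;> simp [h]
    · have c0 : ∑ i, (if (i ∈ K ∧ (0 : Fin 2) = 0) ∨ (i ∉ K ∧ (0 : Fin 2) = 1) then s i else 0)
          = v := by
        rw [Finset.sum_congr rfl (fun i _ => by by_cases h : i ∈ K <;> simp [h] :
          ∀ i ∈ Finset.univ, (if (i ∈ K ∧ (0 : Fin 2) = 0) ∨ (i ∉ K ∧ (0 : Fin 2) = 1) then s i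
            else 0) = if i ∈ K then s i else 0),
          Finset.sum_ite_mem, Finset.univ_inter, hK]
      have c1 : ∑ i, (if (i ∈ K ∧ (1 : Fin 2) = 0) ∨ (i ∉ K ∧ (1 : Fin 2) = 1) then s i else 0)
          = v := by
        rw [Finset.sum_congr rfl (fun i _ => by by_cases h : i ∈ K <;> simp [h] :
          ∀ i ∈ Finset.univ, (if (i ∈ K ∧ (1 : Fin 2) = 0) ∨ (i ∉ K ∧ (1 : Fin 2) = 1) then s i
            else 0) = if i ∈ Kᶜ then s i else 0),
          Finset.sum_ite_mem, Finset.univ_inter, hKc]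
      intro j
      fin_cases j
      · exact c0
      · exact c1
    · have hset : (Finset.univ.filter (fun p : Fin ℓ × Fin 2 =>
          0 < if (p.1 ∈ K ∧ p.2 = 0) ∨ (p.1 ∉ K ∧ p.2 = 1) then s p.1 else 0))
          = Finset.univ.image (fun i : Fin ℓ => (i, if i ∈ K then (0 : Fin 2) else 1)) := by
        ext ⟨i, j⟩
        by_cases hi : i ∈ K <;> simp [hi, (hpos i), Prod.ext_iff, eq_comm] <;>
          (split_ifs with h <;> simp [h, hpos i])
      rw [hset, Finset.card_image_of_injective _ (fun a b h => by
        simpa using congrArg Prod.fst h), Finset.card_univ, Fintype.card_fin]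
  · rintro ⟨m, hrow, hcol, hcard⟩
    set F := Finset.univ.filter (fun p : Fin ℓ × Fin 2 => 0 < m p.1 p.2) with hF
    have hfib : F.card = ∑ i : Fin ℓ, (F.filter (fun p => p.1 = i)).card :=
      Finset.card_eq_sum_card_fiberwise (fun _ _ => Finset.mem_univ _)
    have hge : ∀ i : Fin ℓ, 1 ≤ (F.filter (fun p => p.1 = i)).card := by
      intro i
      have hex : ∃ j, 0 < m i j := by
        by_contra h
        push_neg at h
        have hz : s i = 0 := by
          rw [← hrow i, Fin.sum_univ_two]
          have := h 0; have := h 1; omega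
        exact absurd hz (hpos i).ne'
      obtain ⟨j, hj⟩ := hex
      exact Finset.card_pos.mpr ⟨(i, j), by simp [hF, hj]⟩
    have hsum1 : ∑ _i : Fin ℓ, 1 = ∑ i : Fin ℓ, (F.filter (fun p => p.1 = i)).card := by
      rw [← hfib, hcard]; simp
    have hone : ∀ i : Fin ℓ, (F.filter (fun p => p.1 = i)).card = 1 := by
      intro i
      exact ((Finset.sum_eq_sum_iff_of_le (fun i _ => hge i)).mp hsum1 i
        (Finset.mem_univ i)).symm
    have key : ∀ i, m i 0 = 0 ∨ m i 1 = 0 := by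
      intro i
      by_contra h
      push_neg at h
      have h2 : 1 < (F.filter (fun p : Fin ℓ × Fin 2 => p.1 = i)).card :=
        Finset.one_lt_card.mpr ⟨(i, 0), by simp [hF, Nat.pos_of_ne_zero h.1],
          (i, 1), by simp [hF, Nat.pos_of_ne_zero h.2], by simp⟩
      have := hone i
      omega
    refine ⟨Finset.univ.filter (fun i => 0 < m i 0), ?_⟩
    have hsub : ∑ i ∈ Finset.univ.filter (fun i => 0 < m i 0), m i 0 = ∑ i, m i 0 :=
      Finset.sum_subset (Finset.subset_univ _) (fun x _ hx => by
        simp only [Finset.mem_filter, Finset.mem_univ, true_and] at hx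
        omega)
    have hcongr : ∑ i ∈ Finset.univ.filter (fun i => 0 < m i 0), s i
        = ∑ i ∈ Finset.univ.filter (fun i => 0 < m i 0), m i 0 := by
      refine Finset.sum_congr rfl (fun i hi => ?_)
      simp only [Finset.mem_filter, Finset.mem_univ, true_and] at hi
      have h1 : m i 1 = 0 := (key i).resolve_left (by omega)
      have := hrow i
      rw [Fin.sum_univ_two] at this
      omega
    rw [hcongr, hsub, hcol 0]
end

section
/- Suppose a reward scheme prevents applicant edge-insertion attacks, i.e. l·R(l+k) ≥ l·R(l) for all l ≥ 1, k ≥ 0, with R positive. Then R is nondecreasing, and consequently for every l ≥ 1 and k ≥ 1 a concealer edge-insertion attack is strictly profitable: (k+1)·R(l+k) > R(l). -/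
theorem applicant_safe_implies_concealer_attack (R : ℕ → ℝ)
    (hR : ∀ l : ℕ, 1 ≤ l → 0 < R l)
    (happ : ∀ l : ℕ, 1 ≤ l → ∀ k : ℕ, (l : ℝ) * R l ≤ (l : ℝ) * R (l + k)) :
    (∀ l : ℕ, 1 ≤ l → ∀ k : ℕ, R l ≤ R (l + k)) ∧
    (∀ l : ℕ, 1 ≤ l → ∀ k : ℕ, 1 ≤ k → R l < ((k : ℝ) + 1) * R (l + k)) := by
  have mono : ∀ l : ℕ, 1 ≤ l → ∀ k : ℕ, R l ≤ R (l + k) := by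
    intro l hl k
    have hlp : (0 : ℝ) < l := by exact_mod_cast hl
    exact le_of_mul_le_mul_left (happ l hl k) hlp
  refine ⟨mono, fun l hl k hk => ?_⟩
  have h1 : R l ≤ R (l + k) := mono l hl k
  have hpos : 0 < R (l + k) := hR (l + k) (le_trans hl (Nat.le_add_right l k))
  have hk1 : (1 : ℝ) < (k : ℝ) + 1 := by
    have : (1 : ℝ) ≤ (k : ℝ) := by exact_mod_cast hk
    linarith
  calc R l ≤ R (l + k) := h1
    _ = 1 * R (l + k) := (one_mul _).symm
    _ < ((k : ℝ) + 1) * R (l + k) := by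
        exact mul_lt_mul_of_pos_right hk1 hpos
end

section
/- In the two-output equal-value merge-avoidance instance (outputs both equal v = (Σ s_i)/2), the minimum number of positive entries of a feasible nonnegative integer matrix is ℓ if the partition exists and ℓ + 1 otherwise. -/
theorem two_output_min_cost (ℓ : ℕ) (s : Fin ℓ → ℕ) (v : ℕ)
    (hpos : ∀ i, 0 < s i) (hsum : ∑ i, s i = 2 * v) :
    ((∃ K : Finset (Fin ℓ), ∑ i ∈ K, s i = v) →
      IsLeast {n : ℕ | ∃ m : Fin ℓ → Fin 2 → ℕ,
        (∀ i, ∑ j, m i j = s i) ∧ (∀ j, ∑ i, m i j = v) ∧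
        (Finset.univ.filter (fun p : Fin ℓ × Fin 2 => 0 < m p.1 p.2)).card = n} ℓ) ∧
    (¬ (∃ K : Finset (Fin ℓ), ∑ i ∈ K, s i = v) →
      IsLeast {n : ℕ | ∃ m : Fin ℓ → Fin 2 → ℕ,
        (∀ i, ∑ j, m i j = s i) ∧ (∀ j, ∑ i, m i j = v) ∧
        (Finset.univ.filter (fun p : Fin ℓ × Fin 2 => 0 < m p.1 p.2)).card = n} (ℓ + 1)) := by
  have hcount : ∀ m : Fin ℓ → Fin 2 → ℕ,
      (Finset.univ.filter (fun p : Fin ℓ × Fin 2 => 0 < m p.1 p.2)).card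
      = ∑ i, ((if 0 < m i 0 then 1 else 0) + (if 0 < m i 1 then 1 else 0)) := by
    intro m
    rw [Finset.card_filter, Fintype.sum_prod_type]
    refine Finset.sum_congr rfl fun i _ => ?_
    rw [Fin.sum_univ_two]
  have hrow : ∀ (m : Fin ℓ → Fin 2 → ℕ), (∀ i, ∑ j, m i j = s i) →
      ∀ i, m i 0 + m i 1 = s i := by
    intro m hm i; have := hm i; rwa [Fin.sum_univ_two] at this
  -- lower bound ℓ for any feasible matrix
  have hlb : ∀ n ∈ {n : ℕ | ∃ m : Fin ℓ → Fin 2 → ℕ,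
        (∀ i, ∑ j, m i j = s i) ∧ (∀ j, ∑ i, m i j = v) ∧
        (Finset.univ.filter (fun p : Fin ℓ × Fin 2 => 0 < m p.1 p.2)).card = n},
      ℓ ≤ n := by
    rintro n ⟨m, hm1, _, hm3⟩
    rw [hcount m] at hm3
    have h1 : (∑ _i : Fin ℓ, 1) ≤
        ∑ i, ((if 0 < m i 0 then 1 else 0) + (if 0 < m i 1 then 1 else 0)) := by
      refine Finset.sum_le_sum fun i _ => ?_
      have hr := hrow m hm1 i
      have := hpos i
      split_ifs <;> omega
    simp only [Finset.sum_const, Finset.card_univ, Fintype.card_fin, smul_eq_mul,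
      mul_one] at h1
    omega
  -- if every row has a single positive entry, a partition exists
  have hpart : ∀ (m : Fin ℓ → Fin 2 → ℕ), (∀ i, ∑ j, m i j = s i) →
      (∀ j, ∑ i, m i j = v) → (∀ i, ¬(0 < m i 0 ∧ 0 < m i 1)) →
      ∃ K : Finset (Fin ℓ), ∑ i ∈ K, s i = v := by
    intro m hm1 hm2 hsingle
    refine ⟨Finset.univ.filter (fun i => 0 < m i 0), ?_⟩
    rw [Finset.sum_filter, ← hm2 0]
    refine Finset.sum_congr rfl fun i _ => ?_
    have hr := hrow m hm1 i
    have hs := hsingle i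
    split_ifs <;> omega
  constructor
  · rintro ⟨K, hK⟩
    constructor
    · refine ⟨fun i j => if i ∈ K then (if j = 0 then s i else 0)
        else (if j = 0 then 0 else s i), ?_, ?_, ?_⟩
      · intro i
        rw [Fin.sum_univ_two]
        by_cases h : i ∈ K <;> simp [h]
      · have h0 : (∑ i : Fin ℓ, if i ∈ K then s i else 0) = v := by
          rw [Finset.sum_ite_mem, Finset.univ_inter, hK]
        have h1 : (∑ i : Fin ℓ, if i ∈ K then 0 else s i) = v := by
          have hsplit : (∑ i : Fin ℓ,
              ((if i ∈ K then s i else 0) + (if i ∈ K then 0 else s i))) = 2 * v := by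
            rw [← hsum]
            exact Finset.sum_congr rfl fun i _ => by split_ifs <;> omega
          rw [Finset.sum_add_distrib, h0] at hsplit
          omega
        intro j
        fin_cases j
        · simpa using h0
        · simpa using h1
      · rw [Finset.card_filter, Fintype.sum_prod_type]
        trans (∑ _i : Fin ℓ, 1)
        · refine Finset.sum_congr rfl fun i _ => ?_
          rw [Fin.sum_univ_two]
          by_cases h : i ∈ K <;> simp [h, hpos i]
        · simp
    · exact hlb
  · intro hno
    constructor
    · -- construction with ℓ + 1 positive entries
      have hvpos : 0 < v := by
        rcases Nat.eq_zero_or_pos v with h | h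
        · exact absurd ⟨∅, by simp [h]⟩ hno
        · exact h
      have hne : (Finset.univ.powerset.filter
          (fun K : Finset (Fin ℓ) => ∑ i ∈ K, s i ≤ v)).Nonempty :=
        ⟨∅, by simp⟩
      obtain ⟨K, hKmem, hKmax⟩ :=
        Finset.exists_max_image _ (fun K : Finset (Fin ℓ) => ∑ i ∈ K, s i) hne
      have hKle : ∑ i ∈ K, s i ≤ v := (Finset.mem_filter.mp hKmem).2
      have hKlt : ∑ i ∈ K, s i < v :=
        lt_of_le_of_ne hKle (fun h => hno ⟨K, h⟩)
      have hKne : K ≠ Finset.univ := by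
        intro h
        rw [h, hsum] at hKlt
        omega
      obtain ⟨i0, hi0⟩ : ∃ i, i ∉ K := by
        by_contra h
        push_neg at h
        exact hKne (Finset.eq_univ_iff_forall.mpr h)
      set t := ∑ i ∈ K, s i with ht
      have hgt : v < t + s i0 := by
        by_contra h
        push_neg at h
        have hmem : insert i0 K ∈ Finset.univ.powerset.filter
            (fun K : Finset (Fin ℓ) => ∑ i ∈ K, s i ≤ v) := by
          refine Finset.mem_filter.mpr ⟨Finset.mem_powerset.mpr (Finset.subset_univ _), ?_⟩
          rw [Finset.sum_insert hi0]
          omega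
        have h2 := hKmax _ hmem
        rw [Finset.sum_insert hi0] at h2
        have := hpos i0
        omega
      refine ⟨fun i j => if i ∈ K then (if j = 0 then s i else 0)
        else if i = i0 then (if j = 0 then v - t else s i0 - (v - t))
        else (if j = 0 then 0 else s i), ?_, ?_, ?_⟩
      case _ =>
        intro i
        rw [Fin.sum_univ_two]
        by_cases h : i ∈ K
        · simp [h]
        · by_cases h2 : i = i0
          · subst h2
            simp only [if_neg h, if_pos rfl]
            norm_num
            omega
          · simp [h, h2]
      case _ =>
        have h0 : (∑ i : Fin ℓ, if i ∈ K then s i else if i = i0 then v - t else 0)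
            = v := by
          trans (∑ i : Fin ℓ, ((if i ∈ K then s i else 0) + (if i = i0 then v - t else 0)))
          · refine Finset.sum_congr rfl fun i _ => ?_
            by_cases h : i ∈ K
            · have hni : i ≠ i0 := fun h2 => hi0 (h2 ▸ h)
              simp [h, hni]
            · by_cases h2 : i = i0 <;> simp [h, h2, hi0]
          · rw [Finset.sum_add_distrib, Finset.sum_ite_mem, Finset.univ_inter,
              Finset.sum_ite_eq' Finset.univ i0]
            simp only [Finset.mem_univ, if_pos]
            omega
        have h1 : (∑ i : Fin ℓ, if i ∈ K then 0
            else if i = i0 then s i0 - (v - t) else s i) = v := by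
          have hsplit : (∑ i : Fin ℓ,
              ((if i ∈ K then s i else if i = i0 then v - t else 0)
              + (if i ∈ K then 0 else if i = i0 then s i0 - (v - t) else s i)))
              = 2 * v := by
            rw [← hsum]
            refine Finset.sum_congr rfl fun i _ => ?_
            by_cases h : i ∈ K
            · simp [h]
            · by_cases h2 : i = i0
              · have e1 : (if i ∈ K then s i else if i = i0 then v - t else 0)
                    = v - t := by simp [h2, hi0]
                have e2 : (if i ∈ K then 0 else if i = i0 then s i0 - (v - t) else s i)
                    = s i0 - (v - t) := by simp [h2, hi0]
                rw [e1, e2, h2]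
                omega
              · simp [h, h2]
          rw [Finset.sum_add_distrib, h0] at hsplit
          omega
        intro j
        fin_cases j
        · simpa using h0
        · simpa using h1
      case _ =>
        rw [Finset.card_filter, Fintype.sum_prod_type]
        trans (∑ i : Fin ℓ, if i = i0 then 2 else 1)
        · refine Finset.sum_congr rfl fun i _ => ?_
          rw [Fin.sum_univ_two]
          by_cases h : i ∈ K
          · have hni : i ≠ i0 := fun h2 => hi0 (h2 ▸ h)
            simp [h, hni, hpos i]
          · by_cases h2 : i = i0
            · have h3 : 0 < v - t := by omega
              have h4 : v - t < s i0 := by omega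
              simp [h2, hi0, h3, h4]
            · simp [h, h2, hpos i]
        · trans (∑ i : Fin ℓ, (1 + if i = i0 then 1 else 0))
          · exact Finset.sum_congr rfl fun i _ => by split_ifs <;> rfl
          · rw [Finset.sum_add_distrib, Finset.sum_ite_eq' Finset.univ i0]
            simp
    · rintro n ⟨m, hm1, hm2, hm3⟩
      by_cases hall : ∀ i, ¬(0 < m i 0 ∧ 0 < m i 1)
      · exact absurd (hpart m hm1 hm2 hall) hno
      · push_neg at hall
        obtain ⟨i0, h1, h2⟩ := hall
        rw [hcount m] at hm3
        have hlt : (∑ _i : Fin ℓ, 1) <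
            ∑ i, ((if 0 < m i 0 then 1 else 0) + (if 0 < m i 1 then 1 else 0)) := by
          refine Finset.sum_lt_sum (fun i _ => ?_) ⟨i0, Finset.mem_univ i0, ?_⟩
          · have hr := hrow m hm1 i
            have := hpos i
            split_ifs <;> omega
          · simp [h1, h2]
        simp only [Finset.sum_const, Finset.card_univ, Fintype.card_fin, smul_eq_mul,
          mul_one] at hlt
        omega
end
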